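/- Consider the k-player game G where player j receives a uniformly random independent bit x_j and outputs a pair (i_j, a_j) ∈ [k] × {0,1}; the players win iff all i_j are equal to some common i and x_i equals the XOR of {a_1,...,a_k} \ {a_i}. Then the classical value of G is exactly 1/2. -/

import Mathlib

/-- Winning condition of the k-player game: player `j` receives bit `x j` and outputs
`f j (x j) = (i_j, a_j)`; the players win iff all `i_j` equal some common `i` and
`x i` equals the XOR of the answers `a_j` for `j ≠ i` (parity computed in `ZMod 2`). -/
def winCond (k : ℕ) (f : Fin k → Bool → Fin k × Bool) (x : Fin k → Bool) : Prop :=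
  ∃ i : Fin k, (∀ j, (f j (x j)).1 = i) ∧
    ((if x i then (1 : ZMod 2) else 0) =
      ∑ j ∈ Finset.univ.erase i, (if (f j (x j)).2 then (1 : ZMod 2) else 0))

open Classical in
/-- Winning probability of a deterministic strategy `f` over independent uniform input bits. -/
noncomputable def winProb (k : ℕ) (f : Fin k → Bool → Fin k × Bool) : ℝ :=
  (∑ x : Fin k → Bool, if winCond k f x then (1 : ℝ) else 0) / 2 ^ k

instance (k : ℕ) (f : Fin k → Bool → Fin k × Bool) : DecidablePred (winCond k f) :=
  fun x => by unfold winCond; infer_instance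

lemma winProb_eq (k : ℕ) (f : Fin k → Bool → Fin k × Bool) :
    winProb k f = ((Finset.univ.filter (winCond k f)).card : ℝ) / 2 ^ k := by
  unfold winProb
  congr 1
  rw [← Finset.sum_boole (p := winCond k f) (s := Finset.univ)]
  exact Finset.sum_congr rfl (fun x _ => by congr)

set_option maxRecDepth 10000 in
lemma d2 : ∀ f : Fin 2 → Bool → Fin 2 × Bool,
    (Finset.univ.filter (winCond 2 f)).card ≤ 2 := by decide

lemma d1 : ∀ f : Fin 1 → Bool → Fin 1 × Bool,
    (Finset.univ.filter (winCond 1 f)).card ≤ 1 := by decide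

lemma card_inputs (k : ℕ) : Fintype.card (Fin k → Bool) = 2 ^ k := by
  simp

lemma flip_card_eq (k : ℕ) (i0 : Fin k) (p : Bool → Prop) [DecidablePred p] :
    (Finset.univ.filter (fun x : Fin k → Bool => p (x i0))).card
      = (Finset.univ.filter (fun x : Fin k → Bool => p (!x i0))).card := by
  apply Finset.card_bij' (i := fun x _ => Function.update x i0 (!x i0))
    (j := fun x _ => Function.update x i0 (!x i0))
  · intro x _
    simp [Function.update_idem]
  · intro x _
    simp [Function.update_idem]
  · intro x hx
    simp only [Finset.mem_filter, Finset.mem_univ, true_and] at hx ⊢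
    simpa using hx
  · intro x hx
    simp only [Finset.mem_filter, Finset.mem_univ, true_and] at hx ⊢
    simpa using hx

lemma two_mul_card_le (k : ℕ) (hk : 1 ≤ k) (f : Fin k → Bool → Fin k × Bool) :
    2 * (Finset.univ.filter (winCond k f)).card ≤ 2 ^ k := by
  rcases Nat.lt_or_ge k 3 with h | h3
  · interval_cases k
    · have := d1 f; omega
    · have := d2 f; omega
  · -- k ≥ 3 : injection from winners into losers
    set j0 : Fin k := ⟨0, hk⟩ with hj0
    set W := Finset.univ.filter (winCond k f) with hW
    set L := Finset.univ.filter (fun x => ¬ winCond k f x) with hL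
    have hsum : W.card + L.card = 2 ^ k := by
      rw [hW, hL, Finset.card_filter_add_card_filter_not, Finset.card_univ]
      simp
    have hcard : 3 ≤ Fintype.card (Fin k) := by simpa using h3
    have key : W.card ≤ L.card := by
      apply Finset.card_le_card_of_injOn
        (fun x => Function.update x ((f j0 (x j0)).1) (!(x ((f j0 (x j0)).1))))
      · -- maps winners to losers
        intro x hx
        rw [hW, Finset.mem_coe, Finset.mem_filter] at hx
        obtain ⟨-, i, hall, hpar⟩ := hx
        have hix : (f j0 (x j0)).1 = i := hall j0
        beta_reduce
        rw [hix]
        set y := Function.update x i (!(x i)) with hy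
        have hyj : ∀ j, j ≠ i → y j = x j := fun j hj => Function.update_of_ne hj _ _
        have hyi : y i = !(x i) := Function.update_self _ _ _
        rw [hL, Finset.mem_coe, Finset.mem_filter]
        refine ⟨Finset.mem_univ _, ?_⟩
        rintro ⟨i', hall', hpar'⟩
        -- find j ≠ i
        obtain ⟨j, hj⟩ := Fintype.exists_ne_of_one_lt_card (by omega) i
        have hii' : i' = i := by
          rw [← hall' j, hyj j hj, hall j]
        rw [hii'] at hpar'
        have hR : (∑ j ∈ Finset.univ.erase i, (if (f j (y j)).2 then (1 : ZMod 2) else 0))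
            = ∑ j ∈ Finset.univ.erase i, (if (f j (x j)).2 then (1 : ZMod 2) else 0) := by
          refine Finset.sum_congr rfl (fun j hj => ?_)
          rw [hyj j (Finset.ne_of_mem_erase hj)]
        rw [hR, ← hpar, hyi] at hpar'
        cases hxb : x i <;> rw [hxb] at hpar' <;> simp at hpar'
      · -- injective on W
        intro x hx x' hx' heq
        dsimp only at heq
        obtain ⟨i, hall, -⟩ := (Finset.mem_filter.mp (Finset.mem_coe.mp hx)).2
        obtain ⟨i', hall', -⟩ := (Finset.mem_filter.mp (Finset.mem_coe.mp hx')).2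
        have hix : (f j0 (x j0)).1 = i := hall j0
        have hix' : (f j0 (x' j0)).1 = i' := hall' j0
        simp only [hix, hix'] at heq
        by_cases hii : i = i'
        · subst hii
          funext j
          by_cases hji : j = i
          · subst hji
            have := congrFun heq j
            simp only [Function.update_self] at this
            exact Bool.not_inj this
          · have := congrFun heq j
            rwa [Function.update_of_ne hji, Function.update_of_ne hji] at this
        · exfalso
          -- find j distinct from both i and i'
          have hne : (({i, i'}ᶜ : Finset (Fin k))).Nonempty := by
            rw [← Finset.card_pos, Finset.card_compl]
            have h2 : ({i, i'} : Finset (Fin k)).card ≤ 2 := by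
              apply le_trans (Finset.card_insert_le _ _); simp
            omega
          obtain ⟨j, hjmem⟩ := hne
          simp only [Finset.mem_compl, Finset.mem_insert, Finset.mem_singleton,
            not_or] at hjmem
          obtain ⟨hji, hji'⟩ := hjmem
          have hxx : x j = x' j := by
            have := congrFun heq j
            rwa [Function.update_of_ne hji, Function.update_of_ne hji'] at this
          exact hii (by rw [← hall j, hxx, hall' j])
    omega

lemma lower_iff (k : ℕ) (hk : 1 ≤ k) (x : Fin k → Bool) :
    winCond k (fun _ _ => (⟨0, hk⟩, false)) x ↔ x ⟨0, hk⟩ = false := by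
  constructor
  · rintro ⟨i, hall, hpar⟩
    have hi : i = ⟨0, hk⟩ := (hall ⟨0, hk⟩).symm
    subst hi
    simp only [if_neg Bool.false_ne_true, Finset.sum_const_zero] at hpar
    cases hx : x ⟨0, hk⟩
    · rfl
    · rw [hx] at hpar; simp at hpar
  · intro hx
    refine ⟨⟨0, hk⟩, fun j => rfl, ?_⟩
    simp [hx]

lemma lower_card (k : ℕ) (hk : 1 ≤ k) :
    2 * (Finset.univ.filter (winCond k (fun _ _ => (⟨0, hk⟩, false)))).card = 2 ^ k := by
  have h1 : Finset.univ.filter (winCond k (fun _ _ => ((⟨0, hk⟩ : Fin k), false)))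
      = Finset.univ.filter (fun x : Fin k → Bool => x ⟨0, hk⟩ = false) := by
    apply Finset.filter_congr
    intro x _
    exact lower_iff k hk x
  rw [h1]
  have h2 := flip_card_eq k ⟨0, hk⟩ (fun b => b = false)
  have h3 : Finset.univ.filter (fun x : Fin k → Bool => (!x ⟨0, hk⟩) = false)
      = Finset.univ.filter (fun x : Fin k → Bool => ¬ (x ⟨0, hk⟩ = false)) := by
    apply Finset.filter_congr
    intro x _
    cases x ⟨0, hk⟩ <;> simp
  rw [h3] at h2
  have h4 : (Finset.univ.filter (fun x : Fin k → Bool => x ⟨0, hk⟩ = false)).card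
      + (Finset.univ.filter (fun x : Fin k → Bool => ¬ (x ⟨0, hk⟩ = false))).card = 2 ^ k := by
    rw [Finset.card_filter_add_card_filter_not, Finset.card_univ]
    simp
  rw [← h4, h2, two_mul]

theorem stmt15 (k : ℕ) (hk : 1 ≤ k) :
    (∀ f : Fin k → Bool → Fin k × Bool, winProb k f ≤ 1 / 2) ∧
    (∃ f : Fin k → Bool → Fin k × Bool, winProb k f = 1 / 2) := by
  have hpow : (0 : ℝ) < 2 ^ k := by positivity
  constructor
  · intro f
    rw [winProb_eq, div_le_div_iff₀ hpow (by norm_num)]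
    have h := two_mul_card_le k hk f
    have h' : (2 : ℝ) * ((Finset.univ.filter (winCond k f)).card : ℝ) ≤ 2 ^ k := by
      exact_mod_cast h
    linarith
  · refine ⟨fun _ _ => (⟨0, hk⟩, false), ?_⟩
    rw [winProb_eq]
    have h := lower_card k hk
    have h' : (2 : ℝ) *
        ((Finset.univ.filter (winCond k (fun _ _ => ((⟨0, hk⟩ : Fin k), false)))).card : ℝ)
        = 2 ^ k := by exact_mod_cast h
    rw [div_eq_div_iff hpow.ne' (by norm_num : (2:ℝ) ≠ 0)]
    linarith
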